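/- arXiv:cs/0509058 — 5 statements merged into one kernel-verified Lean document; each statement's English description precedes it below -/
import Mathlib

section
/- In a partitional awareness structure (i.e., each possibility correspondence K_i is reflexive, transitive, and Euclidean) where awareness is generated by primitive propositions, for every agent i, every state s, and every formula φ: (M,s) ⊨ A_i φ if and only if (M,s) ⊨ X_i φ ∨ (¬X_i φ ∧ X_i ¬X_i φ), where X_i φ is defined as A_i φ ∧ K_i φ. -/
/-! Language with knowledge `K`, explicit knowledge `X`, and awareness `A`. -/
inductive AForm (α : Type) (n : ℕ) : Type
  | top : AForm α n
  | prim (p : α) : AForm α n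
  | neg (φ : AForm α n) : AForm α n
  | and (φ ψ : AForm α n) : AForm α n
  | K (i : Fin n) (φ : AForm α n) : AForm α n
  | X (i : Fin n) (φ : AForm α n) : AForm α n
  | A (i : Fin n) (φ : AForm α n) : AForm α n

namespace AForm

def prims {α : Type} {n : ℕ} : AForm α n → Set α
  | top => ∅
  | prim p => {p}
  | neg φ => prims φ
  | and φ ψ => prims φ ∪ prims ψ
  | K _ φ => prims φ
  | X _ φ => prims φ
  | A _ φ => prims φ

/-- `φ ∨ ψ` as an abbreviation of `¬(¬φ ∧ ¬ψ)`. -/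
def orF {α : Type} {n : ℕ} (a b : AForm α n) : AForm α n := neg (and (neg a) (neg b))

end AForm

/-- An awareness structure for `n` agents over primitive propositions `α`. -/
structure AwStruct (α : Type) (n : ℕ) where
  State : Type
  pi : State → α → Bool
  k : Fin n → State → Set State
  aw : Fin n → State → Set (AForm α n)

/-- Standard (2-valued) satisfaction; `X_i φ` is `A_i φ ∧ K_i φ`. -/
def AwStruct.sat {α : Type} {n : ℕ} (M : AwStruct α n) : AForm α n → M.State → Prop
  | .top => fun _ => True
  | .prim p => fun s => M.pi s p = true
  | .neg φ => fun s => ¬ AwStruct.sat M φ s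
  | .and φ ψ => fun s => AwStruct.sat M φ s ∧ AwStruct.sat M ψ s
  | .K i φ => fun s => ∀ t ∈ M.k i s, AwStruct.sat M φ t
  | .X i φ => fun s => φ ∈ M.aw i s ∧ ∀ t ∈ M.k i s, AwStruct.sat M φ t
  | .A i φ => fun s => φ ∈ M.aw i s


/-! The right-hand disjunction splits on whether `K_i φ` holds. If it does, `A_i φ` is `X_i φ`.
If it does not, negative introspection (from euclideanness) gives `K_i ¬K_i φ`, hence `K_i ¬X_i φ`;
and since `¬X_i φ` has the same primitive propositions as `φ`, the agent is aware of it exactly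
when aware of `φ`. So with `A_i φ` we get `X_i ¬X_i φ`, and without it neither disjunct can hold. -/

namespace AwStruct

variable {α : Type} {n : ℕ} (M : AwStruct α n) {i : Fin n}

theorem mem_aw_iff_of_prims_eq {s : M.State}
    (hpg : ∀ φ : AForm α n, φ ∈ M.aw i s ↔ ∀ p ∈ φ.prims, AForm.prim p ∈ M.aw i s)
    {φ ψ : AForm α n} (h : φ.prims = ψ.prims) : φ ∈ M.aw i s ↔ ψ ∈ M.aw i s := by
  rw [hpg, hpg, h]

theorem mem_aw_neg_X_iff {s : M.State}
    (hpg : ∀ φ : AForm α n, φ ∈ M.aw i s ↔ ∀ p ∈ φ.prims, AForm.prim p ∈ M.aw i s)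
    {j : Fin n} {φ : AForm α n} : .neg (.X j φ) ∈ M.aw i s ↔ φ ∈ M.aw i s :=
  M.mem_aw_iff_of_prims_eq hpg rfl

theorem sat_K_neg_K_of_not_sat_K (heucl : ∀ s t, t ∈ M.k i s → M.k i s ⊆ M.k i t)
    {s : M.State} {φ : AForm α n} (hK : ¬M.sat (.K i φ) s) :
    M.sat (.K i (.neg (.K i φ))) s :=
  fun t ht hKt => hK fun u hu => hKt u (heucl s t ht hu)

theorem sat_X_neg_X_of_not_sat_K (heucl : ∀ s t, t ∈ M.k i s → M.k i s ⊆ M.k i t)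
    {s : M.State} (hpg : ∀ φ : AForm α n, φ ∈ M.aw i s ↔ ∀ p ∈ φ.prims, AForm.prim p ∈ M.aw i s)
    {φ : AForm α n} (hA : φ ∈ M.aw i s) (hK : ¬M.sat (.K i φ) s) :
    M.sat (.X i (.neg (.X i φ))) s :=
  ⟨(M.mem_aw_neg_X_iff hpg).2 hA,
    fun t ht hXt => M.sat_K_neg_K_of_not_sat_K heucl hK t ht hXt.2⟩

end AwStruct

theorem awareness_definable_general {α : Type} {n : ℕ} (M : AwStruct α n)
    (heucl : ∀ (i : Fin n) (s t : M.State), t ∈ M.k i s → M.k i s ⊆ M.k i t)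
    (hpg : ∀ (i : Fin n) (s : M.State) (φ : AForm α n),
      φ ∈ M.aw i s ↔ ∀ p ∈ φ.prims, AForm.prim p ∈ M.aw i s)
    (i : Fin n) (s : M.State) (φ : AForm α n) :
    M.sat (AForm.A i φ) s ↔
      M.sat (AForm.orF (AForm.X i φ)
        (AForm.and (AForm.neg (AForm.X i φ)) (AForm.X i (AForm.neg (AForm.X i φ))))) s := by
  show φ ∈ M.aw i s ↔
    ¬(¬M.sat (.X i φ) s ∧ ¬(¬M.sat (.X i φ) s ∧ M.sat (.X i (.neg (.X i φ))) s))
  constructor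
  · rintro hA ⟨hnX, hnXnX⟩
    have hnK : ¬M.sat (.K i φ) s := fun hK => hnX ⟨hA, hK⟩
    exact hnXnX ⟨hnX, M.sat_X_neg_X_of_not_sat_K (heucl i) (hpg i s) hA hnK⟩
  · intro h
    by_contra hA
    exact h ⟨fun hX => hA hX.1, fun hXnX => hA ((M.mem_aw_neg_X_iff (hpg i s)).1 hXnX.2.1)⟩

/-- In a partitional awareness structure where awareness is generated by primitive
propositions, `A_i φ` is equivalent to `X_i φ ∨ (¬X_i φ ∧ X_i ¬X_i φ)`. -/
theorem awareness_definable {α : Type} {n : ℕ} (M : AwStruct α n)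
    (hrefl : ∀ (i : Fin n) (s : M.State), s ∈ M.k i s)
    (htrans : ∀ (i : Fin n) (s t : M.State), t ∈ M.k i s → M.k i t ⊆ M.k i s)
    (heucl : ∀ (i : Fin n) (s t : M.State), t ∈ M.k i s → M.k i s ⊆ M.k i t)
    (hpg : ∀ (i : Fin n) (s : M.State) (φ : AForm α n),
      φ ∈ M.aw i s ↔ ∀ p ∈ φ.prims, AForm.prim p ∈ M.aw i s)
    (i : Fin n) (s : M.State) (φ : AForm α n) :
    M.sat (AForm.A i φ) s ↔
      M.sat (AForm.orF (AForm.X i φ)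
        (AForm.and (AForm.neg (AForm.X i φ)) (AForm.X i (AForm.neg (AForm.X i φ))))) s :=
  awareness_definable_general M heucl hpg i s φ
end

section
/- In any HMS structure, if Ψ ⊆ Ψ', then every formula of the language L^{K,↪}_n(Ψ) (built from primitive propositions in Ψ using ¬, ∧, ↪, and K_1,…,K_n) is defined (true or false) at every state in S_{Ψ'}. -/
inductive Form (α : Type) (n : ℕ) : Type
  | top : Form α n
  | prim (p : α) : Form α n
  | neg (φ : Form α n) : Form α n
  | and (φ ψ : Form α n) : Form α n
  | imp (φ ψ : Form α n) : Form α n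
  | know (i : Fin n) (φ : Form α n) : Form α n

namespace Form

/-- The set of primitive propositions occurring in a formula. -/
def prims {α : Type} {n : ℕ} : Form α n → Set α
  | top => ∅
  | prim p => {p}
  | neg φ => prims φ
  | and φ ψ => prims φ ∪ prims ψ
  | imp φ ψ => prims φ ∪ prims ψ
  | know _ φ => prims φ

/-- Formulas of `L^K_n` : no occurrence of the nonstandard implication `↪`. -/
def ImpFree {α : Type} {n : ℕ} : Form α n → Prop
  | top => True
  | prim _ => True
  | neg φ => ImpFree φ
  | and φ ψ => ImpFree φ ∧ ImpFree ψ
  | imp _ _ => False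
  | know _ φ => ImpFree φ

end Form

/-- `φ = 1` abbreviates `¬(φ ↪ ¬⊤)`. -/
def eqOne {α : Type} {n : ℕ} (φ : Form α n) : Form α n := .neg (.imp φ (.neg .top))
/-- `φ = 0` abbreviates `¬(¬φ ↪ ¬⊤)`. -/
def eqZero {α : Type} {n : ℕ} (φ : Form α n) : Form α n := .neg (.imp (.neg φ) (.neg .top))
/-- `φ = 1/2` abbreviates `(φ ↪ ¬⊤) ∧ (¬φ ↪ ¬⊤)`. -/
def eqHalf {α : Type} {n : ℕ} (φ : Form α n) : Form α n :=
  .and (.imp φ (.neg .top)) (.imp (.neg φ) (.neg .top))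
/-- `φ ⇌ ψ` abbreviates `(φ ↪ ψ) ∧ (ψ ↪ φ)`. -/
def biimp {α : Type} {n : ℕ} (a b : Form α n) : Form α n := .and (.imp a b) (.imp b a)
/-- `φ ∨ ψ` abbreviates `¬(¬φ ∧ ¬ψ)`. -/
def orF {α : Type} {n : ℕ} (a b : Form α n) : Form α n := .neg (.and (.neg a) (.neg b))

/-- An HMS structure for `n` agents over the set `α` of primitive propositions.
States are partitioned into spaces `S_Ψ` (recorded by `space`); `pi s p = none`
means `p` is undefined (value 1/2) at `s`; `proj s Ψ` is the projection
`ρ_{space s, Ψ} s`, meaningful when `Ψ ⊆ space s`. -/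
structure HMS (α : Type) (n : ℕ) where
  State : Type
  space : State → Set α
  pi : State → α → Option Bool
  pi_def : ∀ s p, (pi s p).isSome ↔ p ∈ space s
  k : Fin n → State → Set State
  proj : State → Set α → State
  proj_space : ∀ s Ψ, Ψ ⊆ space s → space (proj s Ψ) = Ψ
  proj_pi : ∀ s Ψ p, Ψ ⊆ space s → p ∈ Ψ → pi (proj s Ψ) p = pi s p
  proj_comp : ∀ s Ψ Ψ', Ψ ⊆ Ψ' → Ψ' ⊆ space s → proj (proj s Ψ') Ψ = proj s Ψ
  proj_surj : ∀ (t : State) (Ψ' : Set α), space t ⊆ Ψ' →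
    ∃ s, space s = Ψ' ∧ proj s (space t) = t

namespace HMS

/-- 3-valued satisfaction: `(satp M φ s).1` is "φ is true at s",
`(satp M φ s).2` is "¬φ is true at s" (i.e. φ is false at s). -/
def satp {α : Type} {n : ℕ} (M : HMS α n) : Form α n → M.State → Prop × Prop
  | .top => fun _ => (True, False)
  | .prim p => fun s => (M.pi s p = some true, M.pi s p = some false)
  | .neg φ => fun s => ((satp M φ s).2, (satp M φ s).1)
  | .and φ ψ => fun s =>
      ((satp M φ s).1 ∧ (satp M ψ s).1,
       ((satp M φ s).2 ∧ (satp M ψ s).1) ∨ ((satp M φ s).1 ∧ (satp M ψ s).2) ∨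
         ((satp M φ s).2 ∧ (satp M ψ s).2))
  | .imp φ ψ => fun s =>
      (((satp M φ s).1 ∧ (satp M ψ s).1) ∨ (¬ (satp M φ s).1 ∧ ¬ (satp M φ s).2) ∨
         ((satp M φ s).2 ∧ ((satp M ψ s).1 ∨ (satp M ψ s).2)),
       (satp M φ s).1 ∧ (satp M ψ s).2)
  | .know i φ => fun s =>
      (((satp M φ s).1 ∨ (satp M φ s).2) ∧ ∀ t ∈ M.k i s, (satp M φ t).1,
       ((satp M φ s).1 ∨ (satp M φ s).2) ∧
         ¬ (((satp M φ s).1 ∨ (satp M φ s).2) ∧ ∀ t ∈ M.k i s, (satp M φ t).1))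

/-- `(M,s) ⊨ φ`. -/
def Sat {α : Type} {n : ℕ} (M : HMS α n) (s : M.State) (φ : Form α n) : Prop :=
  (satp M φ s).1
/-- `(M,s) ⊨ ¬φ`. -/
def SatN {α : Type} {n : ℕ} (M : HMS α n) (s : M.State) (φ : Form α n) : Prop :=
  (satp M φ s).2
/-- `φ` is defined (true or false) at `s`. -/
def Defined {α : Type} {n : ℕ} (M : HMS α n) (s : M.State) (φ : Form α n) : Prop :=
  M.Sat s φ ∨ M.SatN s φ

/-- `⟦φ⟧_M`, the set of states where `φ` is true. -/
def truthSet {α : Type} {n : ℕ} (M : HMS α n) (φ : Form α n) : Set M.State :=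
  {s | M.Sat s φ}

/-- Confinedness: if `s ∈ S_Ψ` then `K_i(s) ⊆ S_{Ψ'}` for some `Ψ' ⊆ Ψ`. -/
def Confined {α : Type} {n : ℕ} (M : HMS α n) : Prop :=
  ∀ (i : Fin n) (s : M.State), ∃ Ψ', Ψ' ⊆ M.space s ∧ ∀ t ∈ M.k i s, M.space t = Ψ'

/-- `(K_i(s))^↑`, the states in which (some member of) `K_i(s)` is expressible:
`x ∈ (K_i(s))^↑` iff some `t ∈ K_i(s)` lies in a space `⊆ space x` and `x` projects to `t`. -/
def kUp {α : Type} {n : ℕ} (M : HMS α n) (i : Fin n) (s : M.State) : Set M.State :=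
  {x | ∃ t ∈ M.k i s, M.space t ⊆ M.space x ∧ M.proj x (M.space t) = t}

/-- Generalized reflexivity (`r`): `s ∈ (K_i(s))^↑`. -/
def GenRefl {α : Type} {n : ℕ} (M : HMS α n) : Prop :=
  ∀ (i : Fin n) (s : M.State), s ∈ M.kUp i s
/-- Stationarity, part (a) (`t`): `s' ∈ K_i(s)` implies `K_i(s') ⊆ K_i(s)`. -/
def StatA {α : Type} {n : ℕ} (M : HMS α n) : Prop :=
  ∀ (i : Fin n) (s s' : M.State), s' ∈ M.k i s → M.k i s' ⊆ M.k i s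
/-- Stationarity, part (b) (`e`): `s' ∈ K_i(s)` implies `K_i(s') ⊇ K_i(s)`. -/
def StatB {α : Type} {n : ℕ} (M : HMS α n) : Prop :=
  ∀ (i : Fin n) (s s' : M.State), s' ∈ M.k i s → M.k i s ⊆ M.k i s'
/-- Projections preserve knowledge. -/
def ProjKnow {α : Type} {n : ℕ} (M : HMS α n) : Prop :=
  ∀ (i : Fin n) (s : M.State) (Ψ1 Ψ2 : Set α), Ψ1 ⊆ Ψ2 → Ψ2 ⊆ M.space s →
    (∀ t ∈ M.k i s, M.space t = Ψ2) →
    (fun t => M.proj t Ψ1) '' M.k i s = M.k i (M.proj s Ψ1)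
/-- Projections preserve ignorance. -/
def ProjIgn {α : Type} {n : ℕ} (M : HMS α n) : Prop :=
  ∀ (i : Fin n) (s : M.State) (Ψ : Set α), Ψ ⊆ M.space s →
    M.kUp i s ⊆ M.kUp i (M.proj s Ψ)

end HMS

namespace HMS

variable {α : Type} {n : ℕ} (M : HMS α n) {s : M.State}

theorem defined_top : M.Defined s .top :=
  Or.inl trivial

theorem defined_prim {p : α} (hp : p ∈ M.space s) : M.Defined s (.prim p) := by
  obtain ⟨b, hb⟩ := Option.isSome_iff_exists.mp ((M.pi_def s p).mpr hp)
  cases b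
  · exact Or.inr hb
  · exact Or.inl hb

theorem defined_neg_iff {φ : Form α n} : M.Defined s (.neg φ) ↔ M.Defined s φ :=
  Or.comm

theorem defined_and {φ ψ : Form α n} (hφ : M.Defined s φ) (hψ : M.Defined s ψ) :
    M.Defined s (.and φ ψ) := by
  rcases hφ with hφ | hφ <;> rcases hψ with hψ | hψ
  · exact Or.inl ⟨hφ, hψ⟩
  · exact Or.inr (Or.inr (Or.inl ⟨hφ, hψ⟩))
  · exact Or.inr (Or.inl ⟨hφ, hψ⟩)
  · exact Or.inr (Or.inr (Or.inr ⟨hφ, hψ⟩))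

/-- When the antecedent is undefined, `φ ↪ ψ` is true, so only `ψ` has to be defined. -/
theorem defined_imp {φ ψ : Form α n} (hψ : M.Defined s ψ) : M.Defined s (.imp φ ψ) := by
  by_cases hφ : M.Sat s φ
  · rcases hψ with hψ | hψ
    · exact Or.inl (Or.inl ⟨hφ, hψ⟩)
    · exact Or.inr ⟨hφ, hψ⟩
  by_cases hφ' : M.SatN s φ
  · exact Or.inl (Or.inr (Or.inr ⟨hφ', hψ⟩))
  · exact Or.inl (Or.inr (Or.inl ⟨hφ, hφ'⟩))

theorem defined_know_iff {i : Fin n} {φ : Form α n} :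
    M.Defined s (.know i φ) ↔ M.Defined s φ := by
  refine ⟨fun h ↦ h.elim And.left And.left, fun hφ ↦ ?_⟩
  by_cases hK : M.Sat s (.know i φ)
  · exact Or.inl hK
  · exact Or.inr ⟨hφ, hK⟩

theorem defined_of_prims_subset_space {φ : Form α n} (hφ : φ.prims ⊆ M.space s) :
    M.Defined s φ := by
  induction φ with
  | top => exact M.defined_top
  | prim p => exact M.defined_prim (hφ rfl)
  | neg φ ih => exact M.defined_neg_iff.mpr (ih hφ)
  | and φ ψ ihφ ihψ =>
    obtain ⟨hφ₁, hφ₂⟩ := Set.union_subset_iff.mp hφ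
    exact M.defined_and (ihφ hφ₁) (ihψ hφ₂)
  | imp φ ψ _ ihψ => exact M.defined_imp (ihψ (Set.union_subset_iff.mp hφ).2)
  | know i φ ih => exact M.defined_know_iff.mpr (ih hφ)

end HMS

theorem defined_on_larger_space_general {α : Type} {n : ℕ} (M : HMS α n)
    (Ψ Ψ' : Set α) (hΨ : Ψ ⊆ Ψ') (φ : Form α n) (hφ : φ.prims ⊆ Ψ)
    (s : M.State) (hs : M.space s = Ψ') :
    M.Defined s φ :=
  M.defined_of_prims_subset_space (hs ▸ hφ.trans hΨ)

/-- If `Ψ ⊆ Ψ'`, every formula of `L^{K,↪}_n(Ψ)` is defined at every state of `S_{Ψ'}`. -/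
theorem defined_on_larger_space {α : Type} {n : ℕ} (M : HMS α n) (hconf : M.Confined)
    (Ψ Ψ' : Set α) (hΨ : Ψ ⊆ Ψ') (φ : Form α n) (hφ : φ.prims ⊆ Ψ)
    (s : M.State) (hs : M.space s = Ψ') :
    M.Defined s φ :=
  defined_on_larger_space_general M Ψ Ψ' hΨ φ hφ s hs
end

section
/- In any HMS structure M, if Ψ' ⊆ Ψ ⊆ Φ, s ∈ S_Ψ, s' = ρ_{Ψ,Ψ'}(s), and φ ∈ L^K_n(Φ) satisfies (M,s') ⊨ φ, then (M,s) ⊨ φ. -/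
/-!
Induction on `φ`, carrying truth and falsity together from `ρ(s)` to `s`. The only real case
is falsity of `K_i φ`: if `φ` holds throughout `K_i(s)`, it must hold throughout `K_i(ρ(s))`.
Confinedness and the two projection axioms show that every state of `K_i(ρ(s))` is the
projection of some `t ∈ K_i(s)` onto `space t ∩ Ψ'`; there `φ` is still defined, since its
primitives occur both at `t` and at `ρ(s)`, and it is not false, since falsity would persist
to `t`.
-/

namespace HMS

variable {α : Type} {n : ℕ} (M : HMS α n)

theorem proj_self (t : M.State) : M.proj t (M.space t) = t := by
  obtain ⟨s, hs, hst⟩ := M.proj_surj t (M.space t) subset_rfl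
  simpa only [hst] using M.proj_comp s (M.space t) (M.space t) subset_rfl hs.ge

theorem mem_kUp_of_mem_k {i : Fin n} {s t : M.State} (ht : t ∈ M.k i s) : t ∈ M.kUp i s :=
  ⟨t, ht, subset_rfl, M.proj_self t⟩

theorem not_sat_and_satN (φ : Form α n) (x : M.State) : ¬ (M.Sat x φ ∧ M.SatN x φ) := by
  induction φ generalizing x with
  | prim p =>
    rintro ⟨h₁, h₂⟩
    exact Bool.noConfusion (Option.some.inj (h₁.symm.trans h₂))
  | neg φ ih => exact fun h => ih x h.symm
  | and φ ψ ihφ ihψ | imp φ ψ ihφ ihψ =>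
    have := ihφ x; have := ihψ x
    simp only [Sat, SatN, satp] at *
    tauto
  | top | know => simp only [Sat, SatN, satp]; tauto

theorem defined_iff_prims_subset {φ : Form α n} (hφ : φ.ImpFree) (x : M.State) :
    M.Defined x φ ↔ φ.prims ⊆ M.space x := by
  induction φ generalizing x with
  | top => simp [Defined, Sat, SatN, satp, Form.prims]
  | prim p =>
    rw [Form.prims, Set.singleton_subset_iff, ← M.pi_def]
    rcases h : M.pi x p with _ | _ | _ <;> simp [Defined, Sat, SatN, satp, h]
  | neg φ ih => rw [Form.prims, ← ih hφ x]; exact Or.comm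
  | and φ ψ ihφ ihψ =>
    rw [Form.prims, Set.union_subset_iff, ← ihφ hφ.1 x, ← ihψ hφ.2 x]
    simp only [Defined, Sat, SatN, satp]
    tauto
  | imp => exact hφ.elim
  | know i φ ih =>
    rw [Form.prims, ← ih hφ x]
    simp only [Defined, Sat, SatN, satp]
    tauto

section Knowledge

variable {M} {i : Fin n} {s : M.State} {Ψ Ψ' : Set α}

theorem k_proj_eq_self (hpk : M.ProjKnow) (hΨ : Ψ ⊆ M.space s)
    (hk : ∀ t ∈ M.k i s, M.space t = Ψ) : M.k i (M.proj s Ψ) = M.k i s := by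
  rw [← hpk i s Ψ Ψ subset_rfl hΨ hk]
  exact (Set.image_congr fun t ht => hk t ht ▸ M.proj_self t).trans (Set.image_id _)

theorem space_of_mem_k_proj (hpk : M.ProjKnow) {Ψ₂ : Set α} (hΨ : Ψ ⊆ Ψ₂)
    (hΨ₂ : Ψ₂ ⊆ M.space s) (hk : ∀ t ∈ M.k i s, M.space t = Ψ₂) {u : M.State}
    (hu : u ∈ M.k i (M.proj s Ψ)) : M.space u = Ψ := by
  rw [← hpk i s Ψ Ψ₂ hΨ hΨ₂ hk] at hu
  obtain ⟨t, ht, rfl⟩ := hu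
  exact M.proj_space t Ψ (hk t ht ▸ hΨ)

theorem nonempty_k_of_nonempty_k_proj (hpk : M.ProjKnow) (hΨ : Ψ ⊆ M.space s)
    (h : (M.k i (M.proj s Ψ)).Nonempty) : (M.k i s).Nonempty := by
  by_contra hempty
  rw [Set.not_nonempty_iff_eq_empty] at hempty
  have := hpk i s Ψ (M.space s) hΨ subset_rfl (by simp [hempty])
  rw [hempty, Set.image_empty] at this
  exact h.ne_empty this.symm

theorem exists_mem_k_proj_of_mem_k (hpi : M.ProjIgn) (hΨ : Ψ ⊆ M.space s) {t : M.State}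
    (ht : t ∈ M.k i s) :
    ∃ u ∈ M.k i (M.proj s Ψ), M.space u ⊆ M.space t ∧ M.proj t (M.space u) = u :=
  hpi i s Ψ hΨ (M.mem_kUp_of_mem_k ht)

/- If `K_i(s) ⊆ S_{Ψ₂}` and `K_i(ρ s) ⊆ S_{Ψ₁}`, ignorance gives `Ψ₁ = Ψ₂ ∩ Ψ'`, and then
knowledge identifies `K_i(ρ s)` with the projection of `K_i(s)` to `Ψ₁`. -/
theorem exists_proj_eq_of_mem_k_proj (hconf : M.Confined) (hpk : M.ProjKnow)
    (hpi : M.ProjIgn) (hΨ' : Ψ' ⊆ M.space s) {t' : M.State}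
    (ht' : t' ∈ M.k i (M.proj s Ψ')) : ∃ t ∈ M.k i s, M.proj t (M.space t ∩ Ψ') = t' := by
  have hs' : M.space (M.proj s Ψ') = Ψ' := M.proj_space s Ψ' hΨ'
  obtain ⟨Ψ₂, hΨ₂s, hK⟩ := hconf i s
  obtain ⟨Ψ₁, hΨ₁s', hK'⟩ := hconf i (M.proj s Ψ')
  rw [hs'] at hΨ₁s'
  obtain ⟨t₀, ht₀⟩ := nonempty_k_of_nonempty_k_proj hpk hΨ' ⟨t', ht'⟩
  have hΨ₁Ψ₂ : Ψ₁ ⊆ Ψ₂ := by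
    obtain ⟨u, hu, hsub, -⟩ := exists_mem_k_proj_of_mem_k hpi hΨ' ht₀
    rwa [hK' u hu, hK t₀ ht₀] at hsub
  have hΨ₁_eq : Ψ₁ = Ψ₂ ∩ Ψ' := by
    refine subset_antisymm (Set.subset_inter hΨ₁Ψ₂ hΨ₁s') ?_
    obtain ⟨w, hw, hsub, -⟩ :=
      exists_mem_k_proj_of_mem_k hpi (Set.inter_subset_right.trans hs'.ge) ht'
    rw [M.proj_comp s _ _ Set.inter_subset_right hΨ'] at hw
    rwa [space_of_mem_k_proj hpk Set.inter_subset_left hΨ₂s hK hw, hK' t' ht'] at hsub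
  rw [← k_proj_eq_self hpk (hΨ₁s'.trans hs'.ge) hK', M.proj_comp s _ _ hΨ₁s' hΨ',
    ← hpk i s Ψ₁ Ψ₂ hΨ₁Ψ₂ hΨ₂s hK] at ht'
  obtain ⟨t, ht, rfl⟩ := ht'
  exact ⟨t, ht, by rw [hK t ht, ← hΨ₁_eq]⟩

end Knowledge

def ProjMonotone (φ : Form α n) : Prop :=
  ∀ (s : M.State) (Ψ' : Set α), Ψ' ⊆ M.space s →
    (M.Sat (M.proj s Ψ') φ → M.Sat s φ) ∧ (M.SatN (M.proj s Ψ') φ → M.SatN s φ)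

section ProjMonotone

variable {M}

theorem projMonotone_top : M.ProjMonotone .top :=
  fun _ _ _ => ⟨id, id⟩

theorem projMonotone_prim (p : α) : M.ProjMonotone (.prim p) := by
  intro s Ψ' hΨ'
  have key (b : Bool) (hb : M.pi (M.proj s Ψ') p = some b) : M.pi s p = some b := by
    have hp : p ∈ Ψ' := by
      rw [← M.proj_space s Ψ' hΨ', ← M.pi_def, hb]
      rfl
    rwa [← M.proj_pi s Ψ' p hΨ' hp]
  exact ⟨key true, key false⟩

theorem ProjMonotone.neg {φ : Form α n} (h : M.ProjMonotone φ) : M.ProjMonotone (.neg φ) :=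
  fun s Ψ' hΨ' => (h s Ψ' hΨ').symm

theorem ProjMonotone.and {φ ψ : Form α n} (hφ : M.ProjMonotone φ) (hψ : M.ProjMonotone ψ) :
    M.ProjMonotone (.and φ ψ) := by
  intro s Ψ' hΨ'
  have := hφ s Ψ' hΨ'; have := hψ s Ψ' hΨ'
  simp only [Sat, SatN, satp] at *
  tauto

theorem ProjMonotone.defined {φ : Form α n} (h : M.ProjMonotone φ) {s : M.State}
    {Ψ' : Set α} (hΨ' : Ψ' ⊆ M.space s) : M.Defined (M.proj s Ψ') φ → M.Defined s φ :=
  Or.imp (h s Ψ' hΨ').1 (h s Ψ' hΨ').2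

theorem ProjMonotone.know (hconf : M.Confined) (hpk : M.ProjKnow) (hpi : M.ProjIgn)
    {φ : Form α n} (h : M.ProjMonotone φ) (hφ : φ.ImpFree) (i : Fin n) :
    M.ProjMonotone (.know i φ) := by
  intro s Ψ' hΨ'
  have hall (hall' : ∀ t' ∈ M.k i (M.proj s Ψ'), M.Sat t' φ) : ∀ t ∈ M.k i s, M.Sat t φ := by
    intro t ht
    obtain ⟨u, hu, hsub, hproj⟩ := exists_mem_k_proj_of_mem_k hpi hΨ' ht
    exact (h t (M.space u) hsub).1 (by rw [hproj]; exact hall' u hu)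
  refine ⟨fun ⟨hdef, hall'⟩ => ⟨h.defined hΨ' hdef, hall hall'⟩, ?_⟩
  rintro ⟨hdef, hnot⟩
  refine ⟨h.defined hΨ' hdef, fun ⟨_, hsat⟩ => hnot ⟨hdef, fun t' ht' => ?_⟩⟩
  obtain ⟨t, ht, rfl⟩ := exists_proj_eq_of_mem_k_proj hconf hpk hpi hΨ' ht'
  have hdef' : M.Defined (M.proj t (M.space t ∩ Ψ')) φ := by
    rw [M.defined_iff_prims_subset hφ, M.proj_space t _ Set.inter_subset_left]
    refine Set.subset_inter ((M.defined_iff_prims_subset hφ t).1 (Or.inl (hsat t ht))) ?_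
    rw [← M.proj_space s Ψ' hΨ']
    exact (M.defined_iff_prims_subset hφ _).1 hdef
  exact hdef'.resolve_right fun hfalse =>
    M.not_sat_and_satN φ t ⟨hsat t ht, (h t _ Set.inter_subset_left).2 hfalse⟩

theorem projMonotone_of_impFree (hconf : M.Confined) (hpk : M.ProjKnow) (hpi : M.ProjIgn)
    {φ : Form α n} (hφ : φ.ImpFree) : M.ProjMonotone φ := by
  induction φ with
  | top => exact projMonotone_top
  | prim p => exact projMonotone_prim p
  | neg φ ih => exact (ih hφ).neg
  | and φ ψ ihφ ihψ => exact (ihφ hφ.1).and (ihψ hφ.2)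
  | imp => exact hφ.elim
  | know i φ ih => exact (ih hφ).know hconf hpk hpi hφ i

end ProjMonotone

end HMS

/-- Truth of `L^K_n(Φ)` formulas is monotone under projections: if `s' = ρ_{Ψ,Ψ'}(s)`
and `(M,s') ⊨ φ`, then `(M,s) ⊨ φ`. -/
theorem sat_of_sat_proj {α : Type} {n : ℕ} (M : HMS α n)
    (hconf : M.Confined) (hpk : M.ProjKnow) (hpi : M.ProjIgn)
    (Ψ' Ψ : Set α) (hΨ : Ψ' ⊆ Ψ) (s : M.State) (hs : M.space s = Ψ)
    (φ : Form α n) (hφ : φ.ImpFree)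
    (hsat : M.Sat (M.proj s Ψ') φ) :
    M.Sat s φ :=
  (M.projMonotone_of_impFree hconf hpk hpi hφ s Ψ' (hs ▸ hΨ)).1 hsat
end

section
/- Given an awareness structure M in N_n^{C,pd}(Φ) (awareness generated by primitive propositions and agents know what they are aware of, possibility correspondences satisfying C ⊆ {r,t,e}), the HMS structure M' with states Σ × 2^Φ, S_Ψ = Σ × {Ψ}, π'((s,Ψ),p) = π(s,p) if p ∈ Ψ and 1/2 otherwise, K'_i((s,Ψ)) = {(t, Ψ ∩ Ψ_i(s)) : t ∈ K_i(s)} where Ψ_i(s) = A_i(s) ∩ Φ, and ρ_{Ψ',Ψ}((s,Ψ')) = (s,Ψ), satisfies confinedness, projections preserve knowledge, and projections preserve ignorance. -/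
/-- An awareness structure for `n` agents over `α`, with state set `S`. -/
structure Aw (α : Type) (n : ℕ) (S : Type) where
  pi : S → α → Bool
  k : Fin n → S → Set S
  aw : Fin n → S → Set (Form α n)

namespace Aw

/-- Satisfaction where the modality `know i` of `L^K_n` is read as *explicit
knowledge* `X_i` (i.e. this evaluates the translation `φ_X` of a formula `φ`):
`X_i ψ` holds iff `ψ ∈ A_i(s)` and `ψ` holds at all `K_i`-successors. -/
def xsat {α : Type} {n : ℕ} {S : Type} (M : Aw α n S) : Form α n → S → Prop
  | .top => fun _ => True
  | .prim p => fun s => M.pi s p = true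
  | .neg φ => fun s => ¬ xsat M φ s
  | .and φ ψ => fun s => xsat M φ s ∧ xsat M ψ s
  | .imp φ ψ => fun s => xsat M φ s → xsat M ψ s
  | .know i φ => fun s => φ ∈ M.aw i s ∧ ∀ t ∈ M.k i s, xsat M φ t

/-- Awareness is generated by primitive propositions. -/
def PropGen {α : Type} {n : ℕ} {S : Type} (M : Aw α n S) : Prop :=
  ∀ (i : Fin n) (s : S) (φ : Form α n),
    φ ∈ M.aw i s ↔ ∀ p ∈ φ.prims, Form.prim p ∈ M.aw i s

/-- Agents know what they are aware of. -/
def KnowsAw {α : Type} {n : ℕ} {S : Type} (M : Aw α n S) : Prop :=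
  ∀ (i : Fin n) (s t : S), t ∈ M.k i s → M.aw i t = M.aw i s

end Aw

/-- The primitive propositions agent `i` is aware of at `s`: `Ψ_i(s) = A_i(s) ∩ Φ`. -/
def awPrims {α : Type} {n : ℕ} {S : Type} (M : Aw α n S) (i : Fin n) (s : S) : Set α :=
  {p | Form.prim p ∈ M.aw i s}

/-- The possibility correspondence of the constructed HMS structure on `Σ × 2^Φ`:
`K'_i((s,Ψ)) = {(t, Ψ ∩ Ψ_i(s)) : t ∈ K_i(s)}`. -/
def kP {α : Type} {n : ℕ} {S : Type} (M : Aw α n S) (i : Fin n) :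
    S × Set α → Set (S × Set α) :=
  fun x => {y | ∃ t ∈ M.k i x.1, y = (t, x.2 ∩ awPrims M i x.1)}

/-- The projection `ρ_{Ψ',Ψ}((s,Ψ')) = (s,Ψ)`. -/
def rhoP {α : Type} {S : Type} : S × Set α → Set α → S × Set α :=
  fun x Ψ => (x.1, Ψ)

/-- `B^↑` for a set `B` of states of the constructed structure (whose members all lie
in a common space): the states expressible from `B` via the projections. -/
def upP {α : Type} {S : Type} (B : Set (S × Set α)) : Set (S × Set α) :=
  {x | ∃ y ∈ B, y.2 ⊆ x.2 ∧ (x.1, y.2) ∈ B}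

/-! Every successor set `K'_i((s,Ψ))` is a rectangle `K_i(s) × {Ψ ∩ Ψ_i(s)}` inside a single
space, and the projections act on the second coordinate only. Confinedness is then immediate.
Projecting a rectangle gives a rectangle, which matches `K'_i` at the projected state because,
when `K_i(s)` is nonempty, `Ψ1 ⊆ Ψ2 = Ψ3 ∩ Ψ_i(s)` already lies inside `Ψ_i(s)`. Finally `B^↑` of
a rectangle `K × {Φ}` consists of the states over `K` whose space contains `Φ`, which is
antitone in `Φ`. -/

theorem kP_eq_prod {α : Type} {n : ℕ} {S : Type} (M : Aw α n S) (i : Fin n) (x : S × Set α) :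
    kP M i x = M.k i x.1 ×ˢ {x.2 ∩ awPrims M i x.1} := by
  ext ⟨t, Ψ⟩
  simp [kP, and_comm]

section Rectangles

variable {α S : Type}

theorem image_rhoP_prod_singleton (K : Set S) (Φ Ψ : Set α) :
    (fun y => rhoP y Ψ) '' (K ×ˢ {Φ}) = K ×ˢ {Ψ} := by
  ext ⟨t, Ψ'⟩
  simp [rhoP, eq_comm]

theorem upP_prod_singleton (K : Set S) (Φ : Set α) :
    upP (K ×ˢ {Φ}) = {x | x.1 ∈ K ∧ Φ ⊆ x.2} := by
  ext ⟨t, Ψ⟩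
  simp only [upP, Set.mem_prod, Set.mem_singleton_iff, Set.mem_ofPred_eq]
  constructor
  · rintro ⟨y, -, hΦ, ht, rfl⟩
    exact ⟨ht, hΦ⟩
  · rintro ⟨ht, hΦ⟩
    exact ⟨(t, Φ), ⟨ht, rfl⟩, hΦ, ht, rfl⟩

theorem upP_prod_singleton_anti (K : Set S) {Φ Φ' : Set α} (h : Φ ⊆ Φ') :
    upP (K ×ˢ {Φ'}) ⊆ upP (K ×ˢ {Φ}) := by
  rw [upP_prod_singleton, upP_prod_singleton]
  exact fun x ⟨hx, hΦ⟩ => ⟨hx, h.trans hΦ⟩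

end Rectangles

theorem constructed_hms_conditions_general {α : Type} {n : ℕ} {S : Type} (M : Aw α n S) :
    -- confinedness
    (∀ (i : Fin n) (x : S × Set α),
      ∃ Ψ'', Ψ'' ⊆ x.2 ∧ ∀ y ∈ kP M i x, y.2 = Ψ'') ∧
    -- projections preserve knowledge
    (∀ (i : Fin n) (s : S) (Ψ1 Ψ2 Ψ3 : Set α), Ψ1 ⊆ Ψ2 → Ψ2 ⊆ Ψ3 →
      (∀ y ∈ kP M i (s, Ψ3), y.2 = Ψ2) →
      (fun y => rhoP y Ψ1) '' kP M i (s, Ψ3) = kP M i (rhoP (s, Ψ3) Ψ1)) ∧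
    -- projections preserve ignorance
    (∀ (i : Fin n) (s : S) (Ψ Ψ' : Set α), Ψ ⊆ Ψ' →
      upP (kP M i (s, Ψ')) ⊆ upP (kP M i (rhoP (s, Ψ') Ψ))) := by
  refine ⟨fun i x => ?_, fun i s Ψ1 Ψ2 Ψ3 h12 _ hk => ?_, fun i s Ψ Ψ' hΨ => ?_⟩
  · refine ⟨x.2 ∩ awPrims M i x.1, Set.inter_subset_left, fun y hy => ?_⟩
    rw [kP_eq_prod] at hy
    exact hy.2
  · rw [kP_eq_prod] at hk
    rw [kP_eq_prod, kP_eq_prod, image_rhoP_prod_singleton]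
    dsimp only [rhoP]
    rcases (M.k i s).eq_empty_or_nonempty with hK | ⟨t, ht⟩
    · simp [hK]
    · have hΨ2 : Ψ3 ∩ awPrims M i s = Ψ2 := hk (t, _) ⟨ht, rfl⟩
      rw [Set.inter_eq_left.2 (h12.trans (hΨ2 ▸ Set.inter_subset_right))]
  · simp only [kP_eq_prod, rhoP]
    exact upP_prod_singleton_anti _ (Set.inter_subset_inter_left _ hΨ)

/-- Theorem 3.2(b), structural part: the HMS structure constructed from a
propositionally determined awareness structure (states `Σ × 2^Φ`, `S_Ψ = Σ × {Ψ}`,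
`K'_i((s,Ψ)) = {(t, Ψ ∩ Ψ_i(s)) : t ∈ K_i(s)}`, `ρ_{Ψ',Ψ}((s,Ψ')) = (s,Ψ)`)
satisfies confinedness, projections preserve knowledge, and projections preserve
ignorance. -/
theorem constructed_hms_conditions {α : Type} {n : ℕ} {S : Type} (M : Aw α n S)
    (hpg : M.PropGen) (hka : M.KnowsAw) :
    -- confinedness
    (∀ (i : Fin n) (x : S × Set α),
      ∃ Ψ'', Ψ'' ⊆ x.2 ∧ ∀ y ∈ kP M i x, y.2 = Ψ'') ∧
    -- projections preserve knowledge
    (∀ (i : Fin n) (s : S) (Ψ1 Ψ2 Ψ3 : Set α), Ψ1 ⊆ Ψ2 → Ψ2 ⊆ Ψ3 →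
      (∀ y ∈ kP M i (s, Ψ3), y.2 = Ψ2) →
      (fun y => rhoP y Ψ1) '' kP M i (s, Ψ3) = kP M i (rhoP (s, Ψ3) Ψ1)) ∧
    -- projections preserve ignorance
    (∀ (i : Fin n) (s : S) (Ψ Ψ' : Set α), Ψ ⊆ Ψ' →
      upP (kP M i (s, Ψ')) ⊆ upP (kP M i (rhoP (s, Ψ') Ψ))) :=
  constructed_hms_conditions_general M
end

section
/- In the construction of an HMS structure M' from a propositionally-determined awareness structure M (states Σ × 2^Φ, K'_i((s,Ψ)) = {(t, Ψ ∩ Ψ_i(s)) : t ∈ K_i(s)}): if K_i is reflexive then M' satisfies generalized reflexivity; if K_i is transitive then M' satisfies K'_i(x') ⊆ K'_i(x) whenever x' ∈ K'_i(x); if K_i is Euclidean then M' satisfies K'_i(x') ⊇ K'_i(x) whenever x' ∈ K'_i(x). -/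
/-!
Because agents know what they are aware of, `Ψ_i` is constant along `K_i`. Hence for
`x = (s, Ψ)` and `x' = (t, Ψ ∩ Ψ_i(s)) ∈ K'_i(x)` we get `Ψ ∩ Ψ_i(s) ∩ Ψ_i(t) = Ψ ∩ Ψ_i(s)`,
so `K'_i(x)` and `K'_i(x')` are the images of `K_i(s)` and `K_i(t)` under the same map
`u ↦ (u, Ψ ∩ Ψ_i(s))`, and inclusions between the `K_i` transfer to the `K'_i`.
Generalized reflexivity is witnessed by `(s, Ψ ∩ Ψ_i(s)) ∈ K'_i(x)`.
-/

section ConstructedHMS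

variable {α : Type} {n : ℕ} {S : Type} {M : Aw α n S} {i : Fin n}

theorem awPrims_eq_of_mem_k (hka : M.KnowsAw) {s t : S} (ht : t ∈ M.k i s) :
    awPrims M i t = awPrims M i s := by
  simp only [awPrims, hka i s t ht]

theorem kP_eq_image (x : S × Set α) :
    kP M i x = (fun t => (t, x.2 ∩ awPrims M i x.1)) '' M.k i x.1 := by
  ext y
  simp only [kP, Set.mem_ofPred_eq, Set.mem_image, eq_comm]

theorem fst_mem_k_of_mem_kP {x x' : S × Set α} (hx' : x' ∈ kP M i x) : x'.1 ∈ M.k i x.1 := by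
  obtain ⟨t, ht, rfl⟩ := hx'
  exact ht

theorem kP_eq_image_of_mem_kP (hka : M.KnowsAw) {x x' : S × Set α} (hx' : x' ∈ kP M i x) :
    kP M i x' = (fun t => (t, x.2 ∩ awPrims M i x.1)) '' M.k i x'.1 := by
  obtain ⟨t, ht, rfl⟩ := hx'
  rw [kP_eq_image, awPrims_eq_of_mem_k hka ht, Set.inter_assoc, Set.inter_self]

theorem mem_upP_kP {x : S × Set α} (hx : x.1 ∈ M.k i x.1) : x ∈ upP (kP M i x) :=
  ⟨(x.1, x.2 ∩ awPrims M i x.1), ⟨x.1, hx, rfl⟩, Set.inter_subset_left, ⟨x.1, hx, rfl⟩⟩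

theorem kP_subset_kP_of_mem_kP (hka : M.KnowsAw) {x x' : S × Set α} (hx' : x' ∈ kP M i x)
    (hk : M.k i x'.1 ⊆ M.k i x.1) : kP M i x' ⊆ kP M i x := by
  rw [kP_eq_image_of_mem_kP hka hx', kP_eq_image]
  exact Set.image_mono hk

theorem kP_superset_kP_of_mem_kP (hka : M.KnowsAw) {x x' : S × Set α} (hx' : x' ∈ kP M i x)
    (hk : M.k i x.1 ⊆ M.k i x'.1) : kP M i x ⊆ kP M i x' := by
  rw [kP_eq_image_of_mem_kP hka hx', kP_eq_image]
  exact Set.image_mono hk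

end ConstructedHMS

theorem constructed_hms_rte_general {α : Type} {n : ℕ} {S : Type} (M : Aw α n S)
    (hka : M.KnowsAw) (i : Fin n) :
    ((∀ s : S, s ∈ M.k i s) →
      ∀ x : S × Set α, x ∈ upP (kP M i x)) ∧
    ((∀ s t : S, t ∈ M.k i s → M.k i t ⊆ M.k i s) →
      ∀ x x' : S × Set α, x' ∈ kP M i x → kP M i x' ⊆ kP M i x) ∧
    ((∀ s t : S, t ∈ M.k i s → M.k i s ⊆ M.k i t) →
      ∀ x x' : S × Set α, x' ∈ kP M i x → kP M i x ⊆ kP M i x') :=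
  ⟨fun hrefl x => mem_upP_kP (hrefl x.1),
    fun htrans _ _ hx' =>
      kP_subset_kP_of_mem_kP hka hx' (htrans _ _ (fst_mem_k_of_mem_kP hx')),
    fun heucl _ _ hx' =>
      kP_superset_kP_of_mem_kP hka hx' (heucl _ _ (fst_mem_k_of_mem_kP hx'))⟩

/-- In the construction of an HMS structure from a propositionally determined
awareness structure: reflexivity of `K_i` yields generalized reflexivity, transitivity
yields stationarity part (a), and the Euclidean property yields stationarity part (b). -/
theorem constructed_hms_rte {α : Type} {n : ℕ} {S : Type} (M : Aw α n S)
    (hpg : M.PropGen) (hka : M.KnowsAw) (i : Fin n) :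
    ((∀ s : S, s ∈ M.k i s) →
      ∀ x : S × Set α, x ∈ upP (kP M i x)) ∧
    ((∀ s t : S, t ∈ M.k i s → M.k i t ⊆ M.k i s) →
      ∀ x x' : S × Set α, x' ∈ kP M i x → kP M i x' ⊆ kP M i x) ∧
    ((∀ s t : S, t ∈ M.k i s → M.k i s ⊆ M.k i t) →
      ∀ x x' : S × Set α, x' ∈ kP M i x → kP M i x ⊆ kP M i x') :=
  constructed_hms_rte_general M hka i
end
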